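/- Let μ : V × V → V be a symmetric k-bilinear map and μ_p : V × V → V a skew-symmetric k-bilinear map. Then (V, μ, μ_p) is a Poisson algebra — i.e. μ is associative (μ(μ(a,b),c) = μ(a,μ(b,c))), μ_p satisfies the Leibniz rule μ_p(a,μ(b,c)) = μ(μ_p(a,b),c) + μ(μ_p(a,c),b), and μ_p satisfies the Jacobi identity μ_p(a,μ_p(b,c)) + μ_p(b,μ_p(c,a)) + μ_p(c,μ_p(a,b)) = 0 — if and only if [μ,μ] = 0, [μ,μ_p] = 0 and S(S([μ_p,μ_p])) = 2·S([μ_p,μ_p]) (the last condition being e_3(3)[μ_p,μ_p] = 0). -/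

import Mathlib

/-- A map `f : V → V → V` is `k`-bilinear. -/
def IsBilin (k : Type*) [Field k] {V : Type*} [AddCommGroup V] [Module k V]
    (f : V → V → V) : Prop :=
  (∀ a b c, f (a + b) c = f a c + f b c) ∧ (∀ (r : k) (a b), f (r • a) b = r • f a b) ∧
  (∀ a b c, f a (b + c) = f a b + f a c) ∧ (∀ (r : k) (a b), f a (r • b) = r • f a b)

/-- Gerstenhaber composition of two bilinear maps:
`(f ∘ g)(a,b,c) = f(g(a,b),c) − f(a,g(b,c))`. -/
def gcirc {V : Type*} [AddCommGroup V] (f g : V → V → V) : V → V → V → V :=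
  fun a b c => f (g a b) c - f a (g b c)

/-- Gerstenhaber bracket `[f,g] = f∘g + g∘f` of two bilinear maps. -/
def gbr {V : Type*} [AddCommGroup V] (f g : V → V → V) : V → V → V → V :=
  fun a b c => gcirc f g a b c + gcirc g f a b c

/-- The shuffle operator `S` on trilinear maps:
`(S F)(a,b,c) = 2F(a,b,c) − F(b,a,c) − F(a,c,b) + F(b,c,a) + F(c,a,b)`. -/
def Shuf {V : Type*} [AddCommGroup V] (F : V → V → V → V) : V → V → V → V :=
  fun a b c => F a b c + F a b c - F b a c - F a c b + F b c a + F c a b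

/-!
Both brackets unwind into the classical identities. `[μ,μ] = 2 (μ ∘ μ)` is twice the
associator. For `μ` symmetric and `μ_p` skew, `-[μ,μ_p](a,b,c)` is the sum of the Leibniz defects
at `(a,b,c)` and `(c,a,b)`; a function of three variables whose sum with its cyclic rotation
vanishes is zero when `V` has no `2`-torsion. Finally `S[μ_p,μ_p] = -8 J` for the Jacobiator `J`,
which is alternating, and `S` acts on alternating maps as multiplication by `6`; so
`S(S[μ_p,μ_p]) = 2 S[μ_p,μ_p]` says `32 J = 0`.
-/

lemma IsBilin.map_neg_left {k V : Type*} [Field k] [AddCommGroup V] [Module k V]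
    {f : V → V → V} (hf : IsBilin k f) (a b : V) : f (-a) b = -f a b := by
  simpa using hf.2.1 (-1) a b

lemma IsBilin.map_neg_right {k V : Type*} [Field k] [AddCommGroup V] [Module k V]
    {f : V → V → V} (hf : IsBilin k f) (a b : V) : f a (-b) = -f a b := by
  simpa using hf.2.2.2 (-1) a b

section TorsionFree

variable {α M : Type*} [AddCommGroup M] [IsAddTorsionFree M]

lemma six_nsmul_eq_two_nsmul_iff (x : M) : 6 • x = 2 • x ↔ x = 0 := by
  rw [show 6 • x = 4 • x + 2 • x by rw [← add_nsmul], add_eq_right,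
    nsmul_eq_zero_iff_right (by norm_num)]

lemma eq_zero_of_add_rotate_eq_zero {L : α → α → α → M}
    (h : ∀ a b c, L a b c + L c a b = 0) (a b c : α) : L a b c = 0 := by
  have h₁ := eq_neg_of_add_eq_zero_left (h a b c)
  have h₂ := eq_neg_of_add_eq_zero_left (h c a b)
  have h₃ := eq_neg_of_add_eq_zero_left (h b c a)
  have : 2 • L a b c = 0 := by
    rw [two_nsmul]
    nth_rewrite 2 [h₁]
    rw [h₂, h₃, neg_neg, add_neg_cancel]
  exact (nsmul_eq_zero_iff_right two_ne_zero).mp this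

end TorsionFree

section Brackets

variable {V : Type*} [AddCommGroup V]

def jacobiator (f : V → V → V) (a b c : V) : V :=
  f a (f b c) + f b (f c a) + f c (f a b)

def leibnizator (m p : V → V → V) (a b c : V) : V :=
  p a (m b c) - (m (p a b) c + m (p a c) b)

lemma gbr_self (f : V → V → V) : gbr f f = 2 • gcirc f f := by
  funext a b c
  simp only [gbr, Pi.smul_apply, two_nsmul]

lemma gcirc_self_eq_zero_iff (f : V → V → V) :
    gcirc f f = 0 ↔ ∀ a b c, f (f a b) c = f a (f b c) := by
  simp only [funext_iff, gcirc, Pi.zero_apply, sub_eq_zero]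

lemma shuf_eq_six_nsmul {F : V → V → V → V} (h₁₂ : ∀ a b c, F b a c = -F a b c)
    (h₂₃ : ∀ a b c, F a c b = -F a b c) : Shuf F = 6 • F := by
  funext a b c
  have hcyc : F b c a = F a b c := by rw [h₂₃, h₁₂, h₂₃, neg_neg]
  have hcyc' : F c a b = F a b c := by rw [h₁₂, h₂₃, neg_neg]
  simp only [Shuf, Pi.smul_apply, h₁₂ a b c, h₂₃ a b c, hcyc, hcyc']
  abel

section Skew

variable {f : V → V → V} (hskew : ∀ a b, f a b = -f b a) (hneg : ∀ a b, f a (-b) = -f a b)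
include hskew hneg

lemma jacobiator_swap₁₂ (a b c : V) : jacobiator f b a c = -jacobiator f a b c := by
  simp only [jacobiator, hskew a c, hskew c b, hskew b a, hneg]
  abel

lemma jacobiator_swap₂₃ (a b c : V) : jacobiator f a c b = -jacobiator f a b c := by
  simp only [jacobiator, hskew a c, hskew c b, hskew b a, hneg]
  abel

lemma shuf_gbr_self : Shuf (gbr f f) = -(8 • jacobiator f) := by
  funext a b c
  have houter : ∀ x y z : V, f (f x y) z = -f z (f x y) := fun x y z => hskew _ _
  simp only [Shuf, gbr, gcirc, jacobiator, Pi.neg_apply, Pi.smul_apply]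
  simp only [houter]
  simp only [hskew c b, hskew a c, hskew b a, hneg]
  abel

end Skew

lemma leibnizator_add_leibnizator_rotate {m p : V → V → V} (hsymm : ∀ a b, m a b = m b a)
    (hneg : ∀ a b, m (-a) b = -m a b) (hskew : ∀ a b, p a b = -p b a) (a b c : V) :
    leibnizator m p a b c + leibnizator m p c a b = -gbr m p a b c := by
  simp only [leibnizator, gbr, gcirc]
  rw [hskew (m a b) c, hsymm a (p b c)]
  simp only [hskew c a, hskew c b, hneg]
  abel

variable [IsAddTorsionFree V]

lemma gbr_self_eq_zero_iff (f : V → V → V) :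
    gbr f f = 0 ↔ ∀ a b c, f (f a b) c = f a (f b c) := by
  rw [gbr_self, nsmul_eq_zero_iff_right two_ne_zero, gcirc_self_eq_zero_iff]

lemma gbr_eq_zero_iff_leibniz {m p : V → V → V} (hsymm : ∀ a b, m a b = m b a)
    (hneg : ∀ a b, m (-a) b = -m a b) (hskew : ∀ a b, p a b = -p b a) :
    gbr m p = 0 ↔ ∀ a b c, p a (m b c) = m (p a b) c + m (p a c) b := by
  have hsum := leibnizator_add_leibnizator_rotate hsymm hneg hskew
  have hdefect : (∀ a b c, p a (m b c) = m (p a b) c + m (p a c) b) ↔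
      ∀ a b c, leibnizator m p a b c = 0 := by
    simp only [leibnizator, sub_eq_zero]
  rw [hdefect]
  refine ⟨fun h => eq_zero_of_add_rotate_eq_zero fun a b c => ?_, fun h => funext₃ fun a b c => ?_⟩
  · rw [hsum, h, Pi.zero_apply, Pi.zero_apply, Pi.zero_apply, neg_zero]
  · rw [Pi.zero_apply, Pi.zero_apply, Pi.zero_apply, ← neg_eq_zero, ← hsum, h, h, add_zero]

lemma shuf_shuf_gbr_self_eq_iff_jacobi {f : V → V → V} (hskew : ∀ a b, f a b = -f b a)
    (hneg : ∀ a b, f a (-b) = -f a b) :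
    Shuf (Shuf (gbr f f)) = 2 • Shuf (gbr f f) ↔
      ∀ a b c, f a (f b c) + f b (f c a) + f c (f a b) = 0 := by
  have hS := shuf_gbr_self hskew hneg
  have halt₁₂ (a b c : V) : Shuf (gbr f f) b a c = -Shuf (gbr f f) a b c := by
    simp only [hS, Pi.neg_apply, Pi.smul_apply]
    rw [jacobiator_swap₁₂ hskew hneg, smul_neg]
  have halt₂₃ (a b c : V) : Shuf (gbr f f) a c b = -Shuf (gbr f f) a b c := by
    simp only [hS, Pi.neg_apply, Pi.smul_apply]
    rw [jacobiator_swap₂₃ hskew hneg, smul_neg]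
  rw [shuf_eq_six_nsmul halt₁₂ halt₂₃, six_nsmul_eq_two_nsmul_iff, hS, neg_eq_zero,
    nsmul_eq_zero_iff_right (by norm_num)]
  simp only [funext_iff, jacobiator, Pi.zero_apply]

end Brackets

/-- For `μ` symmetric bilinear and `μ_p` skew-symmetric bilinear, `(V,μ,μ_p)` is a
Poisson algebra (associativity, Leibniz rule, Jacobi identity) iff `[μ,μ] = 0`,
`[μ,μ_p] = 0` and `S(S([μ_p,μ_p])) = 2·S([μ_p,μ_p])` (i.e. `e₃(3)[μ_p,μ_p] = 0`). -/
theorem stmt7 {k : Type*} [Field k] [CharZero k] {V : Type*} [AddCommGroup V] [Module k V]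
    (μ μp : V → V → V) (hμbil : IsBilin k μ) (hμpbil : IsBilin k μp)
    (hμsymm : ∀ a b, μ a b = μ b a) (hμpskew : ∀ a b, μp a b = - μp b a) :
    ((∀ a b c, μ (μ a b) c = μ a (μ b c)) ∧
     (∀ a b c, μp a (μ b c) = μ (μp a b) c + μ (μp a c) b) ∧
     (∀ a b c, μp a (μp b c) + μp b (μp c a) + μp c (μp a b) = 0)) ↔
    (gbr μ μ = 0 ∧ gbr μ μp = 0 ∧
      Shuf (Shuf (gbr μp μp)) = 2 • Shuf (gbr μp μp)) := by
  have := IsAddTorsionFree.of_isTorsionFree k V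
  rw [gbr_self_eq_zero_iff, gbr_eq_zero_iff_leibniz hμsymm hμbil.map_neg_left hμpskew,
    shuf_shuf_gbr_self_eq_iff_jacobi hμpskew hμpbil.map_neg_right]
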